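/- Let n ≥ 1 be an integer, ε > 0, and 0 < δ < 1/(2(1+ε)). In ℝ³, for 0 ≤ i ≤ n let v_i be the closed segment from (i, 0, 0) to (i, n, 0), and for 0 ≤ j ≤ n let h_j be the closed segment from (0, j, δ) to (n, j, δ); let S = {v_0,…,v_n} ∪ {h_0,…,h_n}. Then for every integer i with 0 ≤ i ≤ n and every odd integer j with 1 ≤ j ≤ 2n−1, the point q = (i, j/2, δ) satisfies dist(q, v_i) = δ and dist(q, s) ≥ 1/2 for every segment s ∈ S with s ≠ v_i; consequently, (1+ε)·dist(q, v_i) < dist(q, s) for every s ∈ S with s ≠ v_i, so v_i is the unique (1+ε)-approximate nearest segment of q. -/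

import Mathlib

noncomputable section

/-- The point `(x, y, z)` of `ℝ³` as an element of `EuclideanSpace ℝ (Fin 3)`. -/
def pt3 (x y z : ℝ) : EuclideanSpace ℝ (Fin 3) :=
  (WithLp.equiv 2 (Fin 3 → ℝ)).symm ![x, y, z]

/-- The "vertical" segment `v_i` from `(i, 0, 0)` to `(i, n, 0)`. -/
def vseg (n i : ℕ) : Set (EuclideanSpace ℝ (Fin 3)) :=
  segment ℝ (pt3 i 0 0) (pt3 i n 0)

/-- The "horizontal" segment `h_j` from `(0, j, δ)` to `(n, j, δ)`. -/
def hseg (n : ℕ) (δ : ℝ) (j : ℕ) : Set (EuclideanSpace ℝ (Fin 3)) :=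
  segment ℝ (pt3 0 j δ) (pt3 n j δ)

/-- The griddle-like family `S = {v_0, …, v_n} ∪ {h_0, …, h_n}`. -/
def gridFam (n : ℕ) (δ : ℝ) : Set (Set (EuclideanSpace ℝ (Fin 3))) :=
  {s | ∃ i ≤ n, s = vseg n i} ∪ {s | ∃ j ≤ n, s = hseg n δ j}

/-! Every segment of `S` lies in a coordinate plane: `v_{i'}` in `{x = i'}` and in `{z = 0}`,
`h_{j'}` in `{y = j'}`, and the distance from `q` to a subset of `{p | p k = c}` is at least
`|q k - c|`. For `q = (i, j/2, δ)` with `j` odd this bounds the distance to `v_{i'}`, `i' ≠ i`,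
by `1`, to every `h_{j'}` by `1/2`, and to `v_i` by `δ`, attained at the foot `(i, j/2, 0)`.
Finally `(1 + ε) δ < 1/2`. -/

open Metric Set

lemma pt3_apply_zero (x y z : ℝ) : pt3 x y z 0 = x := rfl
lemma pt3_apply_one (x y z : ℝ) : pt3 x y z 1 = y := rfl
lemma pt3_apply_two (x y z : ℝ) : pt3 x y z 2 = z := rfl

lemma dist_pt3 (x y z x' y' z' : ℝ) :
    dist (pt3 x y z) (pt3 x' y' z') = √((x - x') ^ 2 + (y - y') ^ 2 + (z - z') ^ 2) := by
  simp [EuclideanSpace.dist_eq, Fin.sum_univ_three, pt3, Real.dist_eq, sq_abs]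

lemma pt3_mem_segment_of_mem_segment {x z y₀ y₁ y : ℝ} (hy : y ∈ segment ℝ y₀ y₁) :
    pt3 x y z ∈ segment ℝ (pt3 x y₀ z) (pt3 x y₁ z) := by
  obtain ⟨a, b, ha, hb, hab, rfl⟩ := hy
  refine ⟨a, b, ha, hb, hab, ?_⟩
  ext k
  fin_cases k <;> simp [pt3, ← add_mul, hab]

lemma apply_eq_of_mem_segment {ι : Type*} [Fintype ι] {a b p : EuclideanSpace ℝ ι} {k : ι}
    {c : ℝ} (ha : a k = c) (hb : b k = c) (hp : p ∈ segment ℝ a b) : p k = c := by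
  obtain ⟨s, t, -, -, hst, rfl⟩ := hp
  simp [ha, hb, ← add_mul, hst]

lemma abs_sub_le_infDist_segment {ι : Type*} [Fintype ι] {a b : EuclideanSpace ℝ ι} {k : ι}
    {c : ℝ} (ha : a k = c) (hb : b k = c) (q : EuclideanSpace ℝ ι) :
    |q k - c| ≤ infDist q (segment ℝ a b) := by
  refine (le_infDist ⟨a, left_mem_segment ℝ a b⟩).2 fun p hp => ?_
  rw [← apply_eq_of_mem_segment ha hb hp, ← Real.dist_eq]
  exact PiLp.dist_apply_le q p k

lemma infDist_pt3_vseg {n i : ℕ} {y : ℝ} (hy : y ∈ Icc 0 (n : ℝ)) (z : ℝ) :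
    infDist (pt3 i y z) (vseg n i) = |z| := by
  refine le_antisymm ?_ ?_
  · have hmem : pt3 i y 0 ∈ vseg n i := by
      apply pt3_mem_segment_of_mem_segment
      rwa [segment_eq_Icc (Nat.cast_nonneg n)]
    calc infDist (pt3 i y z) (vseg n i) ≤ dist (pt3 i y z) (pt3 i y 0) :=
          infDist_le_dist_of_mem hmem
      _ = |z| := by simp [dist_pt3, Real.sqrt_sq_eq_abs]
  · simpa only [vseg, pt3_apply_two, sub_zero] using
      abs_sub_le_infDist_segment (pt3_apply_two i 0 0) (pt3_apply_two i n 0) (pt3 i y z)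

lemma one_le_infDist_vseg_of_ne {n i i' : ℕ} (h : i' ≠ i) (y z : ℝ) :
    1 ≤ infDist (pt3 i y z) (vseg n i') := by
  have hgap : (1 : ℝ) ≤ |(i : ℝ) - i'| := by
    exact_mod_cast Int.one_le_abs (sub_ne_zero.2 (by exact_mod_cast h.symm : (i : ℤ) ≠ i'))
  simpa only [vseg, pt3_apply_zero] using hgap.trans
    (abs_sub_le_infDist_segment (pt3_apply_zero i' 0 0) (pt3_apply_zero i' n 0) (pt3 i y z))

lemma half_le_abs_half_sub_of_odd {j : ℕ} (hj : Odd j) (j' : ℕ) :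
    1 / 2 ≤ |(j : ℝ) / 2 - j'| := by
  have hne : (j : ℤ) - 2 * j' ≠ 0 := by
    intro h
    exact Nat.not_odd_iff_even.2 ⟨j', by omega⟩ hj
  have hgap : (1 : ℝ) ≤ |(j : ℝ) - 2 * j'| := by exact_mod_cast Int.one_le_abs hne
  rw [show (j : ℝ) / 2 - j' = ((j : ℝ) - 2 * j') / 2 by ring, abs_div, abs_two]
  linarith

lemma half_le_infDist_hseg_of_odd {j : ℕ} (hj : Odd j) (n : ℕ) (δ x z : ℝ) (j' : ℕ) :
    1 / 2 ≤ infDist (pt3 x ((j : ℝ) / 2) z) (hseg n δ j') := by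
  simpa only [hseg, pt3_apply_one] using (half_le_abs_half_sub_of_odd hj j').trans
    (abs_sub_le_infDist_segment (pt3_apply_one 0 j' δ) (pt3_apply_one n j' δ) (pt3 x (j / 2) z))

lemma half_le_infDist_of_mem_gridFam {n i j : ℕ} (hj : Odd j) (δ z : ℝ)
    {s : Set (EuclideanSpace ℝ (Fin 3))} (hs : s ∈ gridFam n δ) (hne : s ≠ vseg n i) :
    1 / 2 ≤ infDist (pt3 i ((j : ℝ) / 2) z) s := by
  rcases hs with ⟨i', -, rfl⟩ | ⟨j', -, rfl⟩
  · have hi' : i' ≠ i := by rintro rfl; exact hne rfl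
    linarith [one_le_infDist_vseg_of_ne (n := n) hi' ((j : ℝ) / 2) z]
  · exact half_le_infDist_hseg_of_odd hj n δ i z j'

theorem griddle_lower_bound_queries_general (n : ℕ)
    (ε δ : ℝ) (hε : 0 < ε) (hδ0 : 0 < δ) (hδ : δ < 1 / (2 * (1 + ε)))
    (i j : ℕ) (hj2 : j ≤ 2 * n - 1) (hjodd : Odd j) :
    Metric.infDist (pt3 i ((j : ℝ) / 2) δ) (vseg n i) = δ ∧
    (∀ s ∈ gridFam n δ, s ≠ vseg n i →
      (1 : ℝ) / 2 ≤ Metric.infDist (pt3 i ((j : ℝ) / 2) δ) s) ∧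
    (∀ s ∈ gridFam n δ, s ≠ vseg n i →
      (1 + ε) * Metric.infDist (pt3 i ((j : ℝ) / 2) δ) (vseg n i) <
        Metric.infDist (pt3 i ((j : ℝ) / 2) δ) s) := by
  have hy : (j : ℝ) / 2 ∈ Icc 0 (n : ℝ) :=
    ⟨by positivity, by rw [div_le_iff₀ two_pos]; exact_mod_cast (by omega : j ≤ n * 2)⟩
  have hnear : infDist (pt3 i ((j : ℝ) / 2) δ) (vseg n i) = δ := by
    rw [infDist_pt3_vseg hy, abs_of_pos hδ0]
  have hfar : ∀ s ∈ gridFam n δ, s ≠ vseg n i → 1 / 2 ≤ infDist (pt3 i ((j : ℝ) / 2) δ) s :=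
    fun s hs hne => half_le_infDist_of_mem_gridFam hjodd δ δ hs hne
  refine ⟨hnear, hfar, fun s hs hne => ?_⟩
  have h1ε : 0 < 1 + ε := by linarith
  calc (1 + ε) * infDist (pt3 i ((j : ℝ) / 2) δ) (vseg n i) = (1 + ε) * δ := by rw [hnear]
    _ < (1 + ε) * (1 / (2 * (1 + ε))) := mul_lt_mul_of_pos_left hδ h1ε
    _ = 1 / 2 := by field_simp
    _ ≤ _ := hfar s hs hne

/-- **Lower-bound construction.** For `0 < δ < 1/(2(1+ε))`, every
query point `q = (i, j/2, δ)` with `0 ≤ i ≤ n` and odd `1 ≤ j ≤ 2n−1` is at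
distance exactly `δ` from `v_i` and at distance at least `1/2` from every other
segment of `S`; consequently `(1+ε)·dist(q, v_i) < dist(q, s)` for every
`s ∈ S` with `s ≠ v_i`, so `v_i` is the unique `(1+ε)`-approximate nearest
segment of `q`. -/
theorem griddle_lower_bound_queries (n : ℕ) (hn : 1 ≤ n)
    (ε δ : ℝ) (hε : 0 < ε) (hδ0 : 0 < δ) (hδ : δ < 1 / (2 * (1 + ε)))
    (i j : ℕ) (hi : i ≤ n) (hj1 : 1 ≤ j) (hj2 : j ≤ 2 * n - 1) (hjodd : Odd j) :
    Metric.infDist (pt3 i ((j : ℝ) / 2) δ) (vseg n i) = δ ∧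
    (∀ s ∈ gridFam n δ, s ≠ vseg n i →
      (1 : ℝ) / 2 ≤ Metric.infDist (pt3 i ((j : ℝ) / 2) δ) s) ∧
    (∀ s ∈ gridFam n δ, s ≠ vseg n i →
      (1 + ε) * Metric.infDist (pt3 i ((j : ℝ) / 2) δ) (vseg n i) <
        Metric.infDist (pt3 i ((j : ℝ) / 2) δ) s) :=
  griddle_lower_bound_queries_general n ε δ hε hδ0 hδ i j hj2 hjodd
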